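/- arXiv:0809.1027 — 2 statements merged into one kernel-verified Lean document; each statement's English description precedes it below -/
import Mathlib

section
/- Let g be a density symmetric about 0, unimodal at 0, and log-concave, with strictly increasing continuous CDF G. For α ∈ (0,1) and d₀ = G⁻¹(1/(1+α)), the function u(x) = x − G⁻¹(α·G(x)) is nondecreasing on (−∞, d₀]. Equivalently, for x ≤ d₀, u(x) is the (1−α)-quantile of the posterior density θ ↦ g(θ−x)/G(x) on [0,∞), and these quantiles are nondecreasing in x. -/
open MeasureTheory Set

/-!
Log-concavity of `g` gives the four-point inequality `g c * g d ≤ g a * g b` whenever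
`[a, b]` lies inside `[c, d]` and `a + b = c + d`. Integrating it over `t ∈ [0, s)`, `r < 0`
at `c = y + r`, `a = y + t`, `b = x + r`, `d = x + t` shows that `x ↦ G (x + s) / G x` is
antitone. Hence if `G y = α G x`, then `G (y + s) ≥ α G (x + s)`, that is
`G⁻¹ (α G (x + s)) ≤ G⁻¹ (α G x) + s`, which is the monotonicity of `u`.
-/

theorem ConcaveOn.add_le_add_of_add_eq {s : Set ℝ} {f : ℝ → ℝ} (hf : ConcaveOn ℝ s f)
    {a b c d : ℝ} (hc : c ∈ s) (hd : d ∈ s) (hca : c ≤ a) (had : a ≤ d) (hsum : a + b = c + d) :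
    f c + f d ≤ f a + f b := by
  rcases (hca.trans had).eq_or_lt with rfl | hcd
  · obtain rfl : a = c := le_antisymm had hca
    obtain rfl : b = a := by linarith
    rfl
  have hdc : d - c ≠ 0 := (sub_pos.2 hcd).ne'
  set l := (d - a) / (d - c)
  set m := (a - c) / (d - c)
  have hl : 0 ≤ l := div_nonneg (by linarith) (by linarith)
  have hm : 0 ≤ m := div_nonneg (by linarith) (by linarith)
  have hlm : l + m = 1 := by rw [← add_div, div_eq_one_iff_eq hdc]; ring
  have ha : l • c + m • d = a := by simp only [smul_eq_mul, l, m]; field_simp; ring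
  have hb : m • c + l • d = b := by
    obtain rfl : b = c + d - a := by linarith
    simp only [smul_eq_mul, l, m]; field_simp; ring
  clear_value l m
  have h₁ := hf.2 hc hd hl hm hlm
  have h₂ := hf.2 hc hd hm hl (by linarith)
  rw [ha] at h₁
  rw [hb] at h₂
  simp only [smul_eq_mul] at h₁ h₂
  linear_combination h₁ + h₂ - (f c + f d) * hlm

theorem mul_le_mul_of_concaveOn_log {g : ℝ → ℝ} (hg : ∀ x, 0 ≤ g x)
    (hlog : ConcaveOn ℝ {x | 0 < g x} (fun x => Real.log (g x)))
    {a b c d : ℝ} (hca : c ≤ a) (had : a ≤ d) (hsum : a + b = c + d) :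
    g c * g d ≤ g a * g b := by
  rcases (hg c).eq_or_lt with hc | hc
  · rw [← hc, zero_mul]; exact mul_nonneg (hg a) (hg b)
  rcases (hg d).eq_or_lt with hd | hd
  · rw [← hd, mul_zero]; exact mul_nonneg (hg a) (hg b)
  have ha : 0 < g a := hlog.1.ordConnected.out hc hd ⟨hca, had⟩
  have hb : 0 < g b := hlog.1.ordConnected.out hc hd ⟨by linarith, by linarith⟩
  have := hlog.add_le_add_of_add_eq hc hd hca had hsum
  rwa [← Real.log_mul hc.ne' hd.ne', ← Real.log_mul ha.ne' hb.ne',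
    Real.log_le_log_iff (mul_pos hc hd) (mul_pos ha hb)] at this

theorem setIntegral_comp_const_add (g : ℝ → ℝ) (a : ℝ) (A : Set ℝ) :
    ∫ t in (a + ·) ⁻¹' A, g (a + t) = ∫ t in A, g t :=
  (measurePreserving_add_left volume a).setIntegral_preimage_emb
    (MeasurableEquiv.addLeft a).measurableEmbedding g A

theorem integral_Ico_mul_integral_Iio_le {g : ℝ → ℝ} (hg : ∀ x, 0 ≤ g x)
    (hlog : ConcaveOn ℝ {x | 0 < g x} (fun x => Real.log (g x))) (hgi : Integrable g)
    {x y : ℝ} (s : ℝ) (hyx : y ≤ x) :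
    (∫ t in Ico x (x + s), g t) * (∫ t in Iio y, g t) ≤
      (∫ t in Ico y (y + s), g t) * ∫ t in Iio x, g t := by
  rw [← setIntegral_comp_const_add g x (Ico x (x + s)), ← setIntegral_comp_const_add g y (Iio y),
    ← setIntegral_comp_const_add g y (Ico y (y + s)), ← setIntegral_comp_const_add g x (Iio x)]
  simp only [preimage_const_add_Ico, preimage_const_add_Iio, sub_self, add_sub_cancel_left]
  rw [← setIntegral_prod_mul, ← setIntegral_prod_mul]
  have hint : ∀ u v, IntegrableOn (fun z : ℝ × ℝ => g (u + z.1) * g (v + z.2))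
      (Ico 0 s ×ˢ Iio 0) (volume.prod volume) := fun u v =>
    ((hgi.comp_add_left u).mul_prod (hgi.comp_add_left v)).integrableOn
  refine setIntegral_mono_on (hint x y) (hint y x) (measurableSet_Ico.prod measurableSet_Iio) ?_
  rintro ⟨t, r⟩ ⟨⟨ht, -⟩, hr⟩
  rw [mul_comm]
  exact mul_le_mul_of_concaveOn_log hg hlog (by linarith [mem_Iio.1 hr]) (by linarith) (by ring)

theorem integral_Iio_add_mul_le {g : ℝ → ℝ} (hg : ∀ x, 0 ≤ g x)
    (hlog : ConcaveOn ℝ {x | 0 < g x} (fun x => Real.log (g x))) (hgi : Integrable g)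
    {x y s : ℝ} (hyx : y ≤ x) (hs : 0 ≤ s) :
    (∫ t in Iio (x + s), g t) * (∫ t in Iio y, g t) ≤
      (∫ t in Iio (y + s), g t) * ∫ t in Iio x, g t := by
  have hsplit (z : ℝ) :
      ∫ t in Iio (z + s), g t = (∫ t in Iio z, g t) + ∫ t in Ico z (z + s), g t := by
    rw [← Iio_union_Ico_eq_Iio (le_add_of_nonneg_right hs),
      setIntegral_union ((Iio_disjoint_Ici le_rfl).mono_right Ico_subset_Ici_self)
        measurableSet_Ico hgi.integrableOn hgi.integrableOn]
  rw [hsplit x, hsplit y]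
  linear_combination integral_Ico_mul_integral_Iio_le hg hlog hgi s hyx

theorem monotone_sub_quantile {G Ginv : ℝ → ℝ} {α : ℝ} (hGpos : ∀ x, 0 < G x)
    (hGmono : StrictMono G) (hα : α < 1) (hGinv : ∀ x, G (Ginv (α * G x)) = α * G x)
    (hratio : ∀ x y s, y ≤ x → 0 ≤ s → G (x + s) * G y ≤ G (y + s) * G x) :
    Monotone fun x => x - Ginv (α * G x) := by
  intro x₁ x₂ h12
  set y := Ginv (α * G x₁)
  have hy : G y = α * G x₁ := hGinv x₁
  have hyx : y ≤ x₁ := hGmono.le_iff_le.1 (by nlinarith [hGpos x₁])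
  have hmul := hratio x₁ y (x₂ - x₁) hyx (sub_nonneg.2 h12)
  rw [add_sub_cancel, hy] at hmul
  have : G (Ginv (α * G x₂)) ≤ G (y + (x₂ - x₁)) := by
    rw [hGinv]
    exact le_of_mul_le_mul_right (by linarith) (hGpos x₁)
  have := hGmono.le_iff_le.1 this
  dsimp only
  linarith

theorem stmt_8_general (g G Ginv : ℝ → ℝ) (α d₀ : ℝ)
    (hnonneg : ∀ x, 0 ≤ g x)
    (hint : ∫ x, g x = 1)
    (hlogconc : ConcaveOn ℝ {x | 0 < g x} (fun x => Real.log (g x)))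
    (hG : ∀ x, G x = ∫ t in Set.Iio x, g t)
    (hGmono : StrictMono G)
    (hGinvR : ∀ t ∈ Set.Ioo (0:ℝ) 1, G (Ginv t) = t)
    (hα : α ∈ Set.Ioo (0:ℝ) 1) :
    MonotoneOn (fun x => x - Ginv (α * G x)) (Set.Iic d₀) := by
  obtain ⟨hα0, hα1⟩ := hα
  have hgi : Integrable g := .of_integral_ne_zero (by rw [hint]; exact one_ne_zero)
  have hGpos : ∀ x, 0 < G x := fun x =>
    (hG (x - 1) ▸ setIntegral_nonneg measurableSet_Iio fun t _ => hnonneg t).trans_lt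
      (hGmono (by linarith))
  have hGlt1 : ∀ x, G x < 1 := fun x =>
    (hGmono (lt_add_one x)).trans_le
      (hG (x + 1) ▸ hint ▸ setIntegral_le_integral hgi (.of_forall hnonneg))
  have hGinv : ∀ x, G (Ginv (α * G x)) = α * G x := fun x =>
    hGinvR _ ⟨mul_pos hα0 (hGpos x), by nlinarith [hGpos x, hGlt1 x]⟩
  refine (monotone_sub_quantile hGpos hGmono hα1 hGinv fun x y s hyx hs => ?_).monotoneOn _
  simp only [hG]
  exact integral_Iio_add_mul_le hnonneg hlogconc hgi hyx hs

theorem stmt_8 (g G Ginv : ℝ → ℝ) (α d₀ : ℝ)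
    (hnonneg : ∀ x, 0 ≤ g x)
    (hint : ∫ x, g x = 1)
    (hsym : ∀ x, g (-x) = g x)
    (hunimodal : AntitoneOn g (Set.Ici 0))
    (hlogconc : ConcaveOn ℝ {x | 0 < g x} (fun x => Real.log (g x)))
    (hG : ∀ x, G x = ∫ t in Set.Iio x, g t)
    (hGmono : StrictMono G)
    (hGcont : Continuous G)
    (hGinvL : ∀ x, Ginv (G x) = x)
    (hGinvR : ∀ t ∈ Set.Ioo (0:ℝ) 1, G (Ginv t) = t)
    (hα : α ∈ Set.Ioo (0:ℝ) 1)
    (hd₀ : d₀ = Ginv (1 / (1 + α))) :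
    MonotoneOn (fun x => x - Ginv (α * G x)) (Set.Iic d₀) :=
  stmt_8_general g G Ginv α d₀ hnonneg hint hlogconc hG hGmono hGinvR hα
end

section
/- With g symmetric about 0, unimodal and log-concave, α ∈ (0,1), d₀ = G⁻¹(1/(1+α)), d₁ = G⁻¹(1−α/2): the solution x₁(θ) of 2G(x₁)−1 = (1−α)G(x₁+θ) is increasing in θ ≥ 0, with x₁(0) = d₀ and x₁(θ) → d₁ as θ → ∞. -/
/-!
Write `G` for the distribution function. Since `g` is non-increasing on `[0, ∞)`, the mass of
an interval `[b, a] ⊆ [0, ∞)` can only shrink when the interval is shifted to the right, and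
every root `x₁(θ)` is positive because `G(x₁(θ)) > 1/2 = G(0)`. If `θ < θ'` but
`x₁(θ') ≤ x₁(θ)`, subtracting the two equations and shifting `[x₁(θ'), x₁(θ)]` by `θ'` gives
`2 Δ < (1 - α) Δ` for `Δ = G(x₁(θ)) - G(x₁(θ')) ≥ 0`, which is absurd. As `θ → ∞` we have
`x₁(θ) + θ ≥ θ → ∞`, so `G(x₁(θ)) → (2 - α)/2 = G(d₁)`, and a strictly monotone `G` transfers
this convergence back to `x₁(θ) → d₁`.
-/

open MeasureTheory Set Filter Topology

theorem StrictMono.tendsto_of_tendsto_comp {α β ι : Type*} [LinearOrder α] [TopologicalSpace α]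
    [OrderTopology α] [LinearOrder β] [TopologicalSpace β] [OrderTopology β] {f : α → β}
    (hf : StrictMono f) {u : ι → α} {l : Filter ι} {a : α}
    (h : Tendsto (fun i => f (u i)) l (𝓝 (f a))) : Tendsto u l (𝓝 a) := by
  rw [tendsto_order] at h ⊢
  exact ⟨fun a' ha' => (h.1 _ (hf ha')).mono fun _ => hf.lt_iff_lt.mp,
    fun a' ha' => (h.2 _ (hf ha')).mono fun _ => hf.lt_iff_lt.mp⟩

theorem StrictMono.pos_of_tendsto_atBot {α β : Type*} [LinearOrder α] [NoMinOrder α]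
    [TopologicalSpace β] [PartialOrder β] [OrderClosedTopology β] [Zero β] {f : α → β}
    (hf : StrictMono f) (h : Tendsto f atBot (𝓝 0)) (x : α) : 0 < f x := by
  obtain ⟨y, hy⟩ := exists_lt x
  exact (hf.monotone.le_of_tendsto h y).trans_lt (hf hy)

section Density

variable {g : ℝ → ℝ}

theorem setIntegral_Iio_zero_of_even (hg : Integrable g) (hsym : ∀ x, g (-x) = g x) :
    ∫ t in Iio 0, g t = (∫ t, g t) / 2 := by
  have hIio : ∫ t in Iio 0, g t = ∫ t in Iic 0, g t := setIntegral_congr_set Iio_ae_eq_Iic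
  have hIoi : ∫ t in Ioi 0, g t = ∫ t in Iic 0, g t := by
    simpa only [hsym, neg_zero] using integral_comp_neg_Ioi (0 : ℝ) g
  have := intervalIntegral.integral_Iic_add_Ioi (b := 0) hg.integrableOn hg.integrableOn
  linarith

theorem setIntegral_Iio_add_sub_le_of_antitoneOn (hg : Integrable g)
    (hanti : AntitoneOn g (Ici 0)) {a b c : ℝ} (hb : 0 ≤ b) (hba : b ≤ a) (hc : 0 ≤ c) :
    (∫ t in Iio (a + c), g t) - ∫ t in Iio (b + c), g t ≤
      (∫ t in Iio a, g t) - ∫ t in Iio b, g t := by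
  rw [intervalIntegral.integral_Iio_sub_Iio' hg.integrableOn hg.integrableOn,
    intervalIntegral.integral_Iio_sub_Iio' hg.integrableOn hg.integrableOn,
    ← intervalIntegral.integral_comp_add_right]
  refine intervalIntegral.integral_mono_on hba (hg.comp_add_right c).intervalIntegrable
    hg.intervalIntegrable fun x hx => hanti ?_ ?_ (by linarith)
  · exact hb.trans hx.1
  · exact mem_Ici.mpr (by linarith [hx.1])

end Density

section Root

variable {G : ℝ → ℝ} {α : ℝ}

theorem pos_of_two_mul_sub_one_eq (hGmono : StrictMono G) (hGpos : ∀ x, 0 < G x)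
    (hG0 : G 0 = 1 / 2) (hα : α < 1) {x θ : ℝ} (h : 2 * G x - 1 = (1 - α) * G (x + θ)) :
    0 < x := by
  refine hGmono.lt_iff_lt.mp ?_
  nlinarith [hGpos (x + θ)]

variable {x₁ : ℝ → ℝ} (hx₁ : ∀ θ, 0 ≤ θ → 2 * G (x₁ θ) - 1 = (1 - α) * G (x₁ θ + θ))
include hx₁

theorem strictMonoOn_of_two_mul_sub_one_eq (hGmono : StrictMono G)
    (hshift : ∀ ⦃a b c⦄, 0 ≤ b → b ≤ a → 0 ≤ c → G (a + c) - G (b + c) ≤ G a - G b)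
    (hpos : ∀ θ, 0 ≤ θ → 0 < x₁ θ) (hα₀ : -1 < α) (hα₁ : α < 1) : StrictMonoOn x₁ (Ici 0) := by
  intro θ hθ θ' hθ' hlt
  by_contra! hle
  have hshifted := hshift (hpos θ' hθ').le hle hθ'
  have hGθ : G (x₁ θ + θ) < G (x₁ θ + θ') := hGmono (by linarith)
  have hΔ : G (x₁ θ') ≤ G (x₁ θ) := hGmono.monotone hle
  nlinarith [hx₁ θ hθ, hx₁ θ' hθ', mul_lt_mul_of_pos_left hGθ (sub_pos.mpr hα₁),
    mul_le_mul_of_nonneg_left hshifted (sub_nonneg.mpr hα₁.le),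
    mul_nonneg (neg_lt_iff_pos_add'.mp hα₀).le (sub_nonneg.mpr hΔ)]

theorem tendsto_of_two_mul_sub_one_eq (hGmono : StrictMono G) (hGtop : Tendsto G atTop (𝓝 1))
    (hpos : ∀ θ, 0 ≤ θ → 0 < x₁ θ) {d : ℝ} (hd : G d = 1 - α / 2) :
    Tendsto x₁ atTop (𝓝 d) := by
  refine hGmono.tendsto_of_tendsto_comp ?_
  have hsum : Tendsto (fun θ => x₁ θ + θ) atTop atTop :=
    tendsto_atTop_mono' atTop ((eventually_ge_atTop 0).mono fun θ hθ =>
      le_add_of_nonneg_left (hpos θ hθ).le) tendsto_id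
  have hlim : Tendsto (fun θ => (1 + (1 - α) * G (x₁ θ + θ)) / 2) atTop (𝓝 (G d)) := by
    rw [hd, show 1 - α / 2 = (1 + (1 - α) * 1) / 2 by ring]
    exact (((hGtop.comp hsum).const_mul _).const_add 1).div_const 2
  refine hlim.congr' ((eventually_ge_atTop 0).mono fun θ hθ => ?_)
  linarith [hx₁ θ hθ]

end Root

theorem stmt_9_general (g G Ginv : ℝ → ℝ) (α d₀ d₁ : ℝ) (x₁ : ℝ → ℝ)
    (hint : ∫ x, g x = 1)
    (hsym : ∀ x, g (-x) = g x)
    (hunimodal : AntitoneOn g (Set.Ici 0))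
    (hG : ∀ x, G x = ∫ t in Set.Iio x, g t)
    (hGmono : StrictMono G)
    (hGinvL : ∀ x, Ginv (G x) = x)
    (hGinvR : ∀ t ∈ Set.Ioo (0:ℝ) 1, G (Ginv t) = t)
    (hα : α ∈ Set.Ioo (0:ℝ) 1)
    (hd₀ : d₀ = Ginv (1 / (1 + α)))
    (hd₁ : d₁ = Ginv (1 - α / 2))
    (hx₁ : ∀ θ, 0 ≤ θ → 2 * G (x₁ θ) - 1 = (1 - α) * G (x₁ θ + θ)) :
    StrictMonoOn x₁ (Set.Ici 0) ∧ x₁ 0 = d₀ ∧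
      Tendsto x₁ atTop (nhds d₁) := by
  obtain ⟨hα0, hα1⟩ := hα
  have hg : Integrable g := Integrable.of_integral_ne_zero (by rw [hint]; exact one_ne_zero)
  have hGeq : G = fun x => ∫ t in Iio x, g t := funext hG
  have hGpos : ∀ x, 0 < G x :=
    hGmono.pos_of_tendsto_atBot (hGeq ▸ tendsto_integral_Iio_zero tendsto_id)
  have hGtop : Tendsto G atTop (𝓝 1) :=
    hGeq ▸ hint ▸ (aecover_Iio tendsto_id).integral_tendsto_of_countably_generated hg
  have hG0 : G 0 = 1 / 2 := by rw [hG, setIntegral_Iio_zero_of_even hg hsym, hint]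
  have hpos : ∀ θ, 0 ≤ θ → 0 < x₁ θ := fun θ hθ =>
    pos_of_two_mul_sub_one_eq hGmono hGpos hG0 hα1 (hx₁ θ hθ)
  have hshift : ∀ ⦃a b c⦄, 0 ≤ b → b ≤ a → 0 ≤ c → G (a + c) - G (b + c) ≤ G a - G b :=
    fun a b c hb hba hc => by
      simpa only [hG] using setIntegral_Iio_add_sub_le_of_antitoneOn hg hunimodal hb hba hc
  have hGx₁0 : G (x₁ 0) = 1 / (1 + α) := by
    rw [eq_div_iff (by linarith)]
    linarith [add_zero (x₁ 0) ▸ hx₁ 0 le_rfl]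
  have hGd₁ : G d₁ = 1 - α / 2 := hd₁ ▸ hGinvR _ ⟨by linarith, by linarith⟩
  exact ⟨strictMonoOn_of_two_mul_sub_one_eq hx₁ hGmono hshift hpos (by linarith) hα1,
    by rw [hd₀, ← hGx₁0, hGinvL], tendsto_of_two_mul_sub_one_eq hx₁ hGmono hGtop hpos hGd₁⟩

theorem stmt_9 (g G Ginv : ℝ → ℝ) (α d₀ d₁ : ℝ) (x₁ : ℝ → ℝ)
    (hnonneg : ∀ x, 0 ≤ g x)
    (hint : ∫ x, g x = 1)
    (hsym : ∀ x, g (-x) = g x)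
    (hunimodal : AntitoneOn g (Set.Ici 0))
    (hlogconc : ConcaveOn ℝ {x | 0 < g x} (fun x => Real.log (g x)))
    (hG : ∀ x, G x = ∫ t in Set.Iio x, g t)
    (hGmono : StrictMono G)
    (hGcont : Continuous G)
    (hGinvL : ∀ x, Ginv (G x) = x)
    (hGinvR : ∀ t ∈ Set.Ioo (0:ℝ) 1, G (Ginv t) = t)
    (hα : α ∈ Set.Ioo (0:ℝ) 1)
    (hd₀ : d₀ = Ginv (1 / (1 + α)))
    (hd₁ : d₁ = Ginv (1 - α / 2))
    (hx₁ : ∀ θ, 0 ≤ θ → 2 * G (x₁ θ) - 1 = (1 - α) * G (x₁ θ + θ)) :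
    StrictMonoOn x₁ (Set.Ici 0) ∧ x₁ 0 = d₀ ∧
      Tendsto x₁ atTop (nhds d₁) :=
  stmt_9_general g G Ginv α d₀ d₁ x₁ hint hsym hunimodal hG hGmono hGinvL hGinvR hα hd₀ hd₁ hx₁
end
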